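/- arXiv:2405.12871 — 2 statements merged into one kernel-verified Lean document; each statement's English description precedes it below -/
import Mathlib

section
/- Consider the directed graph on nodes {v_0, v_1, …, v_{n−1}} (n ≥ 5) with edges v_0→v_1, v_0→v_2, v_1→v_3, v_2→v_3, and v_3→v_j for all 4 ≤ j ≤ n−1, all with propagation probability 1, and seed v_0. Let D(B) denote the number of nodes (other than v_0) unreachable from v_0 after deleting the node set B. Then for B = ∅ and A = {v_1, v_2}: D({v_1}) + D({v_2}) = 2 while D({v_1, v_2}) = n − 1; hence any submodularity ratio ψ satisfying ∑_{ω∈A} [D({ω}) − D(∅)] ≥ ψ·[D(A) − D(∅)] must satisfy ψ ≤ 2/(n−1). -/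
/-- The edge relation of the paper's counterexample graph on `{v_0, …, v_{n−1}}`:
`v_0→v_1, v_0→v_2, v_1→v_3, v_2→v_3`, and `v_3→v_j` for `4 ≤ j ≤ n−1`. -/
def exAdj (n : ℕ) (u v : ℕ) : Prop :=
  (u = 0 ∧ v = 1) ∨ (u = 0 ∧ v = 2) ∨ (u = 1 ∧ v = 3) ∨ (u = 2 ∧ v = 3) ∨
    (u = 3 ∧ 4 ≤ v ∧ v ≤ n - 1)

/-- `exD n B` is the number of non-seed nodes `v ∈ {1,…,n−1}` not reachable from
the seed `v_0 = 0` after deleting the node set `B`. -/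
noncomputable def exD (n : ℕ) (B : Finset ℕ) : ℕ :=
  Set.ncard {v : ℕ | 1 ≤ v ∧ v ≤ n - 1 ∧
    ¬ Relation.ReflTransGen (fun a b => exAdj n a b ∧ a ∉ B ∧ b ∉ B) 0 v}

section aux
variable {n : ℕ} {B : Finset ℕ}

private lemma reach_not_mem (h0 : 0 ∉ B) {v : ℕ}
    (h : Relation.ReflTransGen (fun a b => exAdj n a b ∧ a ∉ B ∧ b ∉ B) 0 v) : v ∉ B := by
  induction h with
  | refl => exact h0
  | tail _ hab _ => exact hab.2.2

private lemma reach_of_not_one (hn : 5 ≤ n) {v : ℕ} (hv1 : 1 ≤ v) (hv2 : v ≤ n - 1)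
    (hv : v ≠ 1) :
    Relation.ReflTransGen (fun a b => exAdj n a b ∧ a ∉ ({1} : Finset ℕ) ∧ b ∉ ({1} : Finset ℕ)) 0 v := by
  have h02 : Relation.ReflTransGen (fun a b => exAdj n a b ∧ a ∉ ({1} : Finset ℕ) ∧ b ∉ ({1} : Finset ℕ)) 0 2 :=
    Relation.ReflTransGen.single ⟨Or.inr (Or.inl ⟨rfl, rfl⟩), by simp, by simp⟩
  have h03 := h02.tail (b := 2) ⟨Or.inr (Or.inr (Or.inr (Or.inl ⟨rfl, rfl⟩))), by simp, by simp⟩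
  rcases eq_or_ne v 2 with rfl | hv2'
  · exact h02
  rcases eq_or_ne v 3 with rfl | hv3
  · exact h03
  refine h03.tail ⟨Or.inr (Or.inr (Or.inr (Or.inr ⟨rfl, by omega, hv2⟩))), by simp, ?_⟩
  simp [hv]

private lemma reach_of_not_two (hn : 5 ≤ n) {v : ℕ} (hv1 : 1 ≤ v) (hv2 : v ≤ n - 1)
    (hv : v ≠ 2) :
    Relation.ReflTransGen (fun a b => exAdj n a b ∧ a ∉ ({2} : Finset ℕ) ∧ b ∉ ({2} : Finset ℕ)) 0 v := by
  have h01 : Relation.ReflTransGen (fun a b => exAdj n a b ∧ a ∉ ({2} : Finset ℕ) ∧ b ∉ ({2} : Finset ℕ)) 0 1 :=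
    Relation.ReflTransGen.single ⟨Or.inl ⟨rfl, rfl⟩, by simp, by simp⟩
  have h03 := h01.tail (b := 1) ⟨Or.inr (Or.inr (Or.inl ⟨rfl, rfl⟩)), by simp, by simp⟩
  rcases eq_or_ne v 1 with rfl | hv1'
  · exact h01
  rcases eq_or_ne v 3 with rfl | hv3
  · exact h03
  refine h03.tail ⟨Or.inr (Or.inr (Or.inr (Or.inr ⟨rfl, by omega, hv2⟩))), by simp, ?_⟩
  simp [hv]

private lemma exD_one (hn : 5 ≤ n) : exD n {1} = 1 := by
  have hset : {v : ℕ | 1 ≤ v ∧ v ≤ n - 1 ∧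
      ¬ Relation.ReflTransGen (fun a b => exAdj n a b ∧ a ∉ ({1} : Finset ℕ) ∧ b ∉ ({1} : Finset ℕ)) 0 v}
      = {1} := by
    ext v
    simp only [Set.mem_setOf_eq, Set.mem_singleton_iff]
    constructor
    · rintro ⟨h1, h2, h3⟩
      by_contra hv
      exact h3 (reach_of_not_one hn h1 h2 hv)
    · rintro rfl
      refine ⟨le_refl _, by omega, fun h => ?_⟩
      exact reach_not_mem (by simp) h (by simp)
  rw [exD, hset, Set.ncard_singleton]

private lemma exD_two (hn : 5 ≤ n) : exD n {2} = 1 := by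
  have hset : {v : ℕ | 1 ≤ v ∧ v ≤ n - 1 ∧
      ¬ Relation.ReflTransGen (fun a b => exAdj n a b ∧ a ∉ ({2} : Finset ℕ) ∧ b ∉ ({2} : Finset ℕ)) 0 v}
      = {2} := by
    ext v
    simp only [Set.mem_setOf_eq, Set.mem_singleton_iff]
    constructor
    · rintro ⟨h1, h2, h3⟩
      by_contra hv
      exact h3 (reach_of_not_two hn h1 h2 hv)
    · rintro rfl
      refine ⟨by omega, by omega, fun h => ?_⟩
      exact reach_not_mem (by simp) h (by simp)
  rw [exD, hset, Set.ncard_singleton]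

private lemma exD_empty (hn : 5 ≤ n) : exD n ∅ = 0 := by
  have hset : {v : ℕ | 1 ≤ v ∧ v ≤ n - 1 ∧
      ¬ Relation.ReflTransGen (fun a b => exAdj n a b ∧ a ∉ (∅ : Finset ℕ) ∧ b ∉ (∅ : Finset ℕ)) 0 v}
      = ∅ := by
    ext v
    simp only [Set.mem_setOf_eq, Set.mem_empty_iff_false, iff_false, not_and, not_not]
    intro h1 h2
    have h01 : Relation.ReflTransGen (fun a b => exAdj n a b ∧ a ∉ (∅ : Finset ℕ) ∧ b ∉ (∅ : Finset ℕ)) 0 1 :=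
      Relation.ReflTransGen.single ⟨Or.inl ⟨rfl, rfl⟩, by simp, by simp⟩
    have h03 := h01.tail (b := 1) ⟨Or.inr (Or.inr (Or.inl ⟨rfl, rfl⟩)), by simp, by simp⟩
    rcases eq_or_ne v 1 with rfl | hv1
    · exact h01
    rcases eq_or_ne v 2 with rfl | hv2
    · exact Relation.ReflTransGen.single ⟨Or.inr (Or.inl ⟨rfl, rfl⟩), by simp, by simp⟩
    rcases eq_or_ne v 3 with rfl | hv3
    · exact h03
    exact h03.tail ⟨Or.inr (Or.inr (Or.inr (Or.inr ⟨rfl, by omega, h2⟩))), by simp, by simp⟩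
  rw [exD, hset, Set.ncard_empty]

private lemma exD_both (hn : 5 ≤ n) : exD n {1, 2} = n - 1 := by
  have key : ∀ v : ℕ, Relation.ReflTransGen
      (fun a b => exAdj n a b ∧ a ∉ ({1, 2} : Finset ℕ) ∧ b ∉ ({1, 2} : Finset ℕ)) 0 v → v = 0 := by
    intro v h
    induction h with
    | refl => rfl
    | tail _ hab ih =>
      subst ih
      rcases hab with ⟨hadj, _, hb⟩
      simp only [Finset.mem_insert, Finset.mem_singleton, not_or] at hb
      rcases hadj with ⟨_, h⟩ | ⟨_, h⟩ | ⟨h, _⟩ | ⟨h, _⟩ | ⟨h, _⟩ <;> omega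
  have hset : {v : ℕ | 1 ≤ v ∧ v ≤ n - 1 ∧
      ¬ Relation.ReflTransGen (fun a b => exAdj n a b ∧ a ∉ ({1, 2} : Finset ℕ) ∧ b ∉ ({1, 2} : Finset ℕ)) 0 v}
      = ↑(Finset.Icc 1 (n - 1)) := by
    ext v
    simp only [Set.mem_setOf_eq, Finset.coe_Icc, Set.mem_Icc]
    constructor
    · rintro ⟨h1, h2, _⟩; exact ⟨h1, h2⟩
    · rintro ⟨h1, h2⟩
      exact ⟨h1, h2, fun h => by have := key v h; omega⟩
  rw [exD, hset, Set.ncard_coe_finset, Nat.card_Icc]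
  omega

end aux

/-- In the counterexample graph, `D({v_1}) + D({v_2}) = 2` while `D({v_1,v_2}) = n−1`,
so any submodularity ratio `ψ` satisfies `ψ ≤ 2/(n−1)`. -/
theorem submodularity_ratio_counterexample (n : ℕ) (hn : 5 ≤ n) :
    exD n {1} + exD n {2} = 2 ∧ exD n {1, 2} = n - 1 ∧
    ∀ ψ : ℝ,
      ((exD n {1} : ℝ) - (exD n ∅ : ℝ)) + ((exD n {2} : ℝ) - (exD n ∅ : ℝ)) ≥
          ψ * ((exD n {1, 2} : ℝ) - (exD n ∅ : ℝ)) →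
        ψ ≤ 2 / ((n : ℝ) - 1) := by
  refine ⟨by rw [exD_one hn, exD_two hn], exD_both hn, ?_⟩
  intro ψ h
  rw [exD_one hn, exD_two hn, exD_both hn, exD_empty hn] at h
  have hcast : ((n - 1 : ℕ) : ℝ) = (n : ℝ) - 1 := by
    have : (1 : ℕ) ≤ n := by omega
    push_cast [this]; ring
  rw [hcast] at h
  have hpos : (0 : ℝ) < (n : ℝ) - 1 := by
    have : (5 : ℝ) ≤ (n : ℝ) := by exact_mod_cast hn
    linarith
  rw [le_div_iff₀ hpos]
  push_cast at h
  linarith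
end

section
/- Let f(x) = (√(x + 2a/9) − √(a/2))² − a/18 for a > 0. Then f is monotone nondecreasing for x ≥ 5a/18, and for any c ≥ 0, if x − c ≤ √(2ac + a²/9) + a/3 then f(x) ≤ c. -/
/-- For `f(x) = (√(x + 2a/9) − √(a/2))² − a/18` with `a > 0`: `f` is monotone
nondecreasing for `x ≥ 5a/18`, and for `c ≥ 0`, if `x − c ≤ √(2ac + a²/9) + a/3`
then `f(x) ≤ c`. -/
theorem lower_bound_algebra (a : ℝ) (ha : 0 < a) :
    (∀ x₁ x₂ : ℝ, 5 * a / 18 ≤ x₁ → x₁ ≤ x₂ →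
      (Real.sqrt (x₁ + 2 * a / 9) - Real.sqrt (a / 2)) ^ 2 - a / 18 ≤
        (Real.sqrt (x₂ + 2 * a / 9) - Real.sqrt (a / 2)) ^ 2 - a / 18) ∧
    (∀ c x : ℝ, 0 ≤ c → 0 ≤ x → x - c ≤ Real.sqrt (2 * a * c + a ^ 2 / 9) + a / 3 →
      (Real.sqrt (x + 2 * a / 9) - Real.sqrt (a / 2)) ^ 2 - a / 18 ≤ c) := by
  constructor
  · intro x₁ x₂ h1 h12
    have hr : Real.sqrt (a / 2) ≤ Real.sqrt (x₁ + 2 * a / 9) :=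
      Real.sqrt_le_sqrt (by linarith)
    have hs : Real.sqrt (x₁ + 2 * a / 9) ≤ Real.sqrt (x₂ + 2 * a / 9) :=
      Real.sqrt_le_sqrt (by linarith)
    have := pow_le_pow_left₀ (sub_nonneg.2 hr)
      (by linarith : Real.sqrt (x₁ + 2 * a / 9) - Real.sqrt (a / 2) ≤
        Real.sqrt (x₂ + 2 * a / 9) - Real.sqrt (a / 2)) 2
    linarith
  · intro c x hc hx hyp
    set s := Real.sqrt (x + 2 * a / 9) with hsdef
    set r := Real.sqrt (a / 2) with hrdef
    have hsnn : 0 ≤ s := Real.sqrt_nonneg _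
    have hrnn : 0 ≤ r := Real.sqrt_nonneg _
    have hs2 : s ^ 2 = x + 2 * a / 9 := Real.sq_sqrt (by linarith)
    have hr2 : r ^ 2 = a / 2 := Real.sq_sqrt (by linarith)
    rcases le_or_gt s r with hsr | hsr
    · -- here (s - r)^2 ≤ a/18 since √(2a/9) ≤ s ≤ r
      have hlow : Real.sqrt (2 * a / 9) ≤ s := Real.sqrt_le_sqrt (by linarith)
      have hrs : r * Real.sqrt (2 * a / 9) = a / 3 := by
        rw [hrdef, ← Real.sqrt_mul (by linarith),
          show a / 2 * (2 * a / 9) = (a / 3) ^ 2 by ring]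
        exact Real.sqrt_sq (by linarith)
      have h29 : (Real.sqrt (2 * a / 9)) ^ 2 = 2 * a / 9 := Real.sq_sqrt (by linarith)
      nlinarith [sq_nonneg (s - Real.sqrt (2 * a / 9))]
    · have hq : (0:ℝ) ≤ c + a / 18 := by linarith
      have hq2 : (Real.sqrt (c + a / 18)) ^ 2 = c + a / 18 := Real.sq_sqrt hq
      have hprod : 2 * (r * Real.sqrt (c + a / 18)) = Real.sqrt (2 * a * c + a ^ 2 / 9) := by
        have h4 : Real.sqrt 4 = 2 := by
          rw [show (4:ℝ) = 2 ^ 2 by norm_num, Real.sqrt_sq]; norm_num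
        rw [hrdef, ← Real.sqrt_mul (show (0:ℝ) ≤ a / 2 by linarith)]
        rw [show 2 * a * c + a ^ 2 / 9 = 4 * (a / 2 * (c + a / 18)) by ring]
        rw [Real.sqrt_mul (show (0:ℝ) ≤ 4 by norm_num), h4]
      have hsq : s ≤ r + Real.sqrt (c + a / 18) := by
        have h1 : x + 2 * a / 9 ≤ (r + Real.sqrt (c + a / 18)) ^ 2 := by
          have : (r + Real.sqrt (c + a / 18)) ^ 2
              = a / 2 + 2 * (r * Real.sqrt (c + a / 18)) + (c + a / 18) := by
            rw [add_sq]; rw [hr2, hq2]; ring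
          rw [this, hprod]; linarith
        calc s ≤ Real.sqrt ((r + Real.sqrt (c + a / 18)) ^ 2) := Real.sqrt_le_sqrt h1
          _ = r + Real.sqrt (c + a / 18) := Real.sqrt_sq (by positivity)
      have := pow_le_pow_left₀ (sub_nonneg.2 hsr.le)
        (by linarith : s - r ≤ Real.sqrt (c + a / 18)) 2
      linarith [hq2, this]
end
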